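/- arXiv:1603.05170 — 5 statements merged into one kernel-verified Lean document; each statement's English description precedes it below -/
import Mathlib

section
/- Two pregeometries (X₁, cl₁) and (X₂, cl₂) are isomorphic via a bijection f : X₁ → X₂ (meaning cl₂(f[Y]) = f[cl₁(Y)] for all Y ⊆ X₁) if and only if dim₁(Y) = dim₂(f[Y]) for all finite Y ⊆ X₁. -/
/-!
By finite character, the closure of a set is determined by the closures of its finite subsets,
and for a finite set `Y` the Steinitz exchange argument shows that all bases of `Y` have
`dim Y` elements, whence `a ∈ cl Y ↔ dim (insert a Y) = dim Y`. So a bijection preserving the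
dimension of finite sets preserves closure. Conversely a closure-preserving bijection preserves
independence, hence dimension.
-/

/-- A pregeometry: a closure operator with monotonicity, idempotence,
finite character and the exchange principle. -/
structure Pregeometry (X : Type*) where
  cl : Set X → Set X
  subset_cl : ∀ Y : Set X, Y ⊆ cl Y
  mono : ∀ ⦃Y Z : Set X⦄, Y ⊆ Z → cl Y ⊆ cl Z
  idem : ∀ Y : Set X, cl (cl Y) = cl Y
  finchar : ∀ (Y : Set X) (a : X), a ∈ cl Y → ∃ Y₀ : Finset X, ↑Y₀ ⊆ Y ∧ a ∈ cl ↑Y₀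
  exchange : ∀ (Y : Set X) (a b : X), a ∈ cl (Y ∪ {b}) → a ∉ cl Y → b ∈ cl (Y ∪ {a})

/-- A set is independent if no point lies in the closure of the rest. -/
def Pregeometry.Indep {X : Type*} (P : Pregeometry X) (Y : Set X) : Prop :=
  ∀ a ∈ Y, a ∉ P.cl (Y \ {a})

/-- Dimension of a set: the cardinality of a basis, i.e. the supremum of cardinalities
of independent (finite) subsets. -/
noncomputable def Pregeometry.dim {X : Type*} (P : Pregeometry X) (Y : Set X) : ℕ :=
  sSup {n | ∃ I : Finset X, ↑I ⊆ Y ∧ P.Indep ↑I ∧ I.card = n}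

namespace Pregeometry

section

variable {X : Type*} (P : Pregeometry X)

theorem cl_subset_of_subset_cl {Y Z : Set X} (h : Y ⊆ P.cl Z) : P.cl Y ⊆ P.cl Z :=
  P.idem Z ▸ P.mono h

theorem insert_subset_cl_insert {Y Z : Set X} (a : X) (h : Y ⊆ P.cl Z) :
    insert a Y ⊆ P.cl (insert a Z) :=
  Set.insert_subset (P.subset_cl _ (Set.mem_insert a Z)) (h.trans (P.mono (Set.subset_insert a Z)))

theorem mem_cl_insert_of_mem_cl_insert {Y : Set X} {a b : X} (h : a ∈ P.cl (insert b Y))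
    (h' : a ∉ P.cl Y) : b ∈ P.cl (insert a Y) := by
  rw [← Set.union_singleton] at h ⊢
  exact P.exchange Y a b h h'

theorem indep_insert {I : Set X} {a : X} (hI : P.Indep I) (ha : a ∉ P.cl I) :
    P.Indep (insert a I) := by
  rintro b (rfl | hbI)
  · rwa [Set.insert_sdiff_self_of_notMem fun h => ha (P.subset_cl I h)]
  · have hba : b ≠ a := by rintro rfl; exact ha (P.subset_cl I hbI)
    intro hb
    rw [← Set.insert_sdiff_singleton_comm hba.symm] at hb
    have := P.mem_cl_insert_of_mem_cl_insert hb (hI b hbI)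
    rw [Set.insert_sdiff_singleton, Set.insert_eq_of_mem hbI] at this
    exact ha this

/-- Steinitz exchange. The auxiliary set `S` is what makes induction on `J` go through: each
step exchanges a point of `J` for a point of `I`, which then moves into `S`. -/
theorem card_le_card_of_indep_union_of_subset_cl (J : Finset X) :
    ∀ {S : Set X} {I : Finset X}, Disjoint S ↑I → P.Indep (S ∪ ↑I) →
      ↑I ⊆ P.cl (S ∪ ↑J) → I.card ≤ J.card := by
  classical
  induction J using Finset.induction_on with
  | empty =>
    intro S I hSI hind hIS
    suffices I = ∅ by simp [this]
    refine Finset.eq_empty_of_forall_notMem fun a ha => hind a (Or.inr ha) ?_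
    have haS : a ∈ P.cl S := by simpa using hIS ha
    exact P.mono (Set.subset_sdiff_singleton Set.subset_union_left (hSI.notMem_of_mem_right ha)) haS
  | insert b J hbJ ih =>
    intro S I hSI hind hIJ
    by_cases hI : ↑I ⊆ P.cl (S ∪ ↑J)
    · exact (ih hSI hind hI).trans (Finset.card_le_card (Finset.subset_insert b J))
    obtain ⟨a, haI, haJ⟩ := Set.not_subset.mp hI
    have hIJ' : ↑I ⊆ P.cl (insert b (S ∪ ↑J)) := by
      simpa only [Finset.coe_insert, Set.union_insert] using hIJ
    have hb : b ∈ P.cl (insert a (S ∪ ↑J)) := P.mem_cl_insert_of_mem_cl_insert (hIJ' haI) haJ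
    have hsub : ↑(I.erase a) ⊆ P.cl (insert a S ∪ ↑J) := by
      refine (Finset.coe_subset.mpr (I.erase_subset a)).trans
        (hIJ'.trans (P.cl_subset_of_subset_cl ?_))
      rw [Set.insert_union]
      exact Set.insert_subset hb ((Set.subset_insert a _).trans (P.subset_cl _))
    have hdisj : Disjoint (insert a S) ↑(I.erase a) := by
      rw [Finset.coe_erase, Set.disjoint_insert_left]
      exact ⟨fun h => h.2 rfl, hSI.mono_right Set.sdiff_subset⟩
    have hunion : insert a S ∪ ↑(I.erase a) = S ∪ ↑I := by
      rw [Finset.coe_erase, Set.insert_union, ← Set.union_insert, Set.insert_sdiff_singleton,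
        Set.insert_eq_of_mem (Finset.mem_coe.mpr haI)]
    have := ih hdisj (hunion ▸ hind) hsub
    rw [Finset.card_erase_of_mem haI] at this
    rw [Finset.card_insert_of_notMem hbJ]
    have := Finset.card_pos.mpr ⟨a, haI⟩
    omega

theorem card_le_card_of_indep_of_subset_cl {I J : Finset X} (hI : P.Indep ↑I)
    (hIJ : ↑I ⊆ P.cl ↑J) : I.card ≤ J.card :=
  P.card_le_card_of_indep_union_of_subset_cl J (Set.empty_disjoint _) (by simpa using hI)
    (by simpa using hIJ)

theorem dim_eq_card_of_indep_of_subset_cl {Y : Set X} {B : Finset X} (hB : P.Indep ↑B)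
    (hBY : ↑B ⊆ Y) (hYB : Y ⊆ P.cl ↑B) : P.dim Y = B.card := by
  have hle : ∀ I : Finset X, ↑I ⊆ Y → P.Indep ↑I → I.card ≤ B.card :=
    fun I hIY hI => P.card_le_card_of_indep_of_subset_cl hI (hIY.trans hYB)
  apply le_antisymm
  · refine csSup_le ⟨B.card, B, hBY, hB, rfl⟩ ?_
    rintro n ⟨I, hIY, hI, rfl⟩
    exact hle I hIY hI
  · refine le_csSup ⟨B.card, ?_⟩ ⟨B, hBY, hB, rfl⟩
    rintro n ⟨I, hIY, hI, rfl⟩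
    exact hle I hIY hI

theorem exists_indep_subset_cl (Y : Finset X) :
    ∃ B ⊆ Y, P.Indep ↑B ∧ ↑Y ⊆ P.cl ↑B := by
  classical
  induction Y using Finset.induction_on with
  | empty => exact ⟨∅, subset_rfl, by simp [Indep], by simp⟩
  | insert a Y _ ih =>
    obtain ⟨B, hBY, hB, hYB⟩ := ih
    by_cases ha : a ∈ P.cl ↑B
    · refine ⟨B, hBY.trans (Finset.subset_insert a Y), hB, ?_⟩
      rw [Finset.coe_insert]
      exact Set.insert_subset ha hYB
    · refine ⟨insert a B, Finset.insert_subset_insert a hBY, ?_, ?_⟩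
      · rw [Finset.coe_insert]
        exact P.indep_insert hB ha
      · rw [Finset.coe_insert, Finset.coe_insert]
        exact P.insert_subset_cl_insert a hYB

theorem mem_cl_iff_dim_insert_eq (Y : Finset X) (a : X) :
    a ∈ P.cl ↑Y ↔ P.dim (insert a ↑Y) = P.dim ↑Y := by
  classical
  obtain ⟨B, hBY, hB, hYB⟩ := P.exists_indep_subset_cl Y
  have hBY' : (↑B : Set X) ⊆ ↑Y := Finset.coe_subset.mpr hBY
  rw [P.dim_eq_card_of_indep_of_subset_cl hB hBY' hYB]
  constructor
  · intro ha
    exact P.dim_eq_card_of_indep_of_subset_cl hB (hBY'.trans (Set.subset_insert a _))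
      (Set.insert_subset (P.cl_subset_of_subset_cl hYB ha) hYB)
  · intro h
    by_contra ha
    have haB : a ∉ P.cl ↑B := fun h' => ha (P.mono hBY' h')
    have haB' : a ∉ B := fun h' => haB (P.subset_cl _ h')
    have hdim : P.dim (insert a ↑Y) = (insert a B).card := by
      refine P.dim_eq_card_of_indep_of_subset_cl ?_ ?_ ?_ <;> rw [Finset.coe_insert]
      · exact P.indep_insert hB haB
      · exact Set.insert_subset_insert hBY'
      · exact P.insert_subset_cl_insert a hYB
    rw [hdim, Finset.card_insert_of_notMem haB'] at h
    omega

end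

variable {X₁ X₂ : Type*} (P₁ : Pregeometry X₁) (P₂ : Pregeometry X₂)

theorem indep_image_iff {f : X₁ → X₂} (hf : Function.Injective f)
    (hcl : ∀ Y : Set X₁, P₂.cl (f '' Y) = f '' P₁.cl Y) (S : Set X₁) :
    P₂.Indep (f '' S) ↔ P₁.Indep S := by
  simp only [Indep, Set.forall_mem_image, ← Set.image_singleton, ← Set.image_sdiff hf, hcl,
    hf.mem_set_image]

theorem dim_image {f : X₁ → X₂} (hf : Function.Injective f)
    (hcl : ∀ Y : Set X₁, P₂.cl (f '' Y) = f '' P₁.cl Y) (Y : Set X₁) :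
    P₂.dim (f '' Y) = P₁.dim Y := by
  classical
  unfold dim
  congr 1
  ext n
  constructor
  · rintro ⟨I, hIY, hI, rfl⟩
    obtain ⟨I₀, hI₀Y, rfl⟩ := Finset.subset_set_image_iff.mp hIY
    rw [Finset.coe_image, indep_image_iff P₁ P₂ hf hcl] at hI
    exact ⟨I₀, hI₀Y, hI, (Finset.card_image_of_injective I₀ hf).symm⟩
  · rintro ⟨I, hIY, hI, rfl⟩
    refine ⟨I.image f, ?_, ?_, Finset.card_image_of_injective I hf⟩ <;> rw [Finset.coe_image]
    · exact Set.image_mono hIY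
    · exact (indep_image_iff P₁ P₂ hf hcl I).mpr hI

theorem image_cl_subset_cl_image (f : X₁ → X₂)
    (hdim : ∀ Y : Finset X₁, P₁.dim ↑Y = P₂.dim (f '' ↑Y)) (Y : Set X₁) :
    f '' P₁.cl Y ⊆ P₂.cl (f '' Y) := by
  classical
  rintro _ ⟨a, ha, rfl⟩
  obtain ⟨Y₀, hY₀Y, haY₀⟩ := P₁.finchar Y a ha
  have hdim₂ : P₂.dim (insert (f a) ↑(Y₀.image f)) = P₂.dim ↑(Y₀.image f) := by
    rw [Finset.coe_image, ← Set.image_insert_eq, ← Finset.coe_insert, ← hdim, ← hdim,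
      Finset.coe_insert, ← P₁.mem_cl_iff_dim_insert_eq]
    exact haY₀
  refine P₂.mono ?_ ((P₂.mem_cl_iff_dim_insert_eq _ _).mpr hdim₂)
  rw [Finset.coe_image]
  exact Set.image_mono hY₀Y

end Pregeometry

/-- Two pregeometries are isomorphic via a bijection `f` (i.e. `f` carries closure to
closure) if and only if `f` preserves the dimension of every finite set. -/
theorem stmt1 {X₁ X₂ : Type*} (P₁ : Pregeometry X₁) (P₂ : Pregeometry X₂) (f : X₁ ≃ X₂) :
    (∀ Y : Set X₁, P₂.cl (f '' Y) = f '' P₁.cl Y) ↔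
    (∀ Y : Finset X₁, P₁.dim ↑Y = P₂.dim (f '' ↑Y)) := by
  classical
  constructor
  · intro hcl Y
    exact (P₁.dim_image P₂ f.injective hcl Y).symm
  · intro hdim Y
    have hdim_symm : ∀ Z : Finset X₂, P₂.dim ↑Z = P₁.dim (f.symm '' ↑Z) := fun Z => by
      simpa [Finset.coe_image] using (hdim (Z.image f.symm)).symm
    refine subset_antisymm ?_ (P₁.image_cl_subset_cl_image P₂ f hdim Y)
    rw [← Equiv.symm_image_subset]
    simpa using P₂.image_cl_subset_cl_image P₁ f.symm hdim_symm (f '' Y)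
end

section
/- If A and B are both self-sufficient in M with respect to a predimension function δ, then A ∩ B is self-sufficient in M. -/
/-- `A` is self-sufficient in `M` (here the whole type) with respect to `δ`:
adding any finite `X` does not decrease `δ`. -/
def SelfSuff {M : Type*} [DecidableEq M] (δ : Finset M → ℤ) (A : Finset M) : Prop :=
  ∀ X : Finset M, δ A ≤ δ (A ∪ X)

lemma key {M : Type*} [DecidableEq M] (δ : Finset M → ℤ)
    (hsubmod : ∀ X Y : Finset M, δ (X ∪ Y) ≤ δ X + δ Y - δ (X ∩ Y))
    {A : Finset M} (hA : SelfSuff δ A) (X : Finset M) : δ (X ∩ A) ≤ δ X := by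
  have h1 := hsubmod A X
  have h2 := hA X
  rw [Finset.inter_comm A X] at h1
  omega

/-- If `A` and `B` are both self-sufficient in `M` with respect to a predimension
function `δ`, then so is `A ∩ B`. -/
theorem stmt6 {M : Type*} [DecidableEq M] (δ : Finset M → ℤ)
    (h0 : δ ∅ = 0)
    (hcard : ∀ B : Finset M, δ B ≤ B.card)
    (hsubmod : ∀ X Y : Finset M, δ (X ∪ Y) ≤ δ X + δ Y - δ (X ∩ Y))
    (A B : Finset M)
    (hA : SelfSuff δ A) (hB : SelfSuff δ B) :
    SelfSuff δ (A ∩ B) := by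
  intro X
  set Y := (A ∩ B) ∪ X with hY
  have hEq : Y ∩ A ∩ B = A ∩ B := by
    ext a; simp [hY, Finset.mem_union, Finset.mem_inter]
  calc δ (A ∩ B) = δ (Y ∩ A ∩ B) := by rw [hEq]
    _ ≤ δ (Y ∩ A) := key δ hsubmod hB _
    _ ≤ δ Y := key δ hsubmod hA _
end

section
/- In the class C₀^G of finite structures with a G-symmetric irreflexive n-ary relation R, for any A, B₁, B₂ ∈ C₀^G with A ⊆ Bᵢ and B₁ ∩ B₂ = A, the free join D with universe B₁ ∪ B₂ and R-relations exactly those of B₁ together with those of B₂ is a simple amalgam of B₁ and B₂ over A with respect to the predimension δ(X) = |X| − r(X). -/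
/-- The set of `G`-orbits of `R`-related tuples whose entries all lie in `A`. -/
def orbitsIn {V : Type*} {n : ℕ} (G : Subgroup (Equiv.Perm (Fin n)))
    (R : Set (Fin n → V)) (A : Finset V) : Set (Set (Fin n → V)) :=
  {O | ∃ t ∈ R, (∀ i, t i ∈ A) ∧ O = {s | ∃ σ ∈ G, s = t ∘ σ}}

/-- The predimension `δ(X) = |X| − r(X)` with respect to the relation `R`. -/
noncomputable def deltaG {V : Type*} {n : ℕ} (G : Subgroup (Equiv.Perm (Fin n)))
    (R : Set (Fin n → V)) (X : Finset V) : ℤ :=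
  (X.card : ℤ) - ((orbitsIn G R X).ncard : ℤ)

/-- In the class of finite structures with a `G`-symmetric irreflexive `n`-ary relation,
the free join `D` of `B₁` and `B₂` over `A = B₁ ∩ B₂` (universe `B₁ ∪ B₂`, relation
`R₁ ∪ R₂`) is a simple amalgam of `B₁` and `B₂` over `A` with respect to
`δ(X) = |X| − r(X)`: the induced structures on `B₁` and `B₂` are the given ones and
the predimension decomposes as `δ(X/A) = δ(X ∩ B₁/A) + δ(X ∩ B₂/A)`. -/
theorem stmt11 {V : Type*} [DecidableEq V] {n : ℕ}
    (G : Subgroup (Equiv.Perm (Fin n)))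
    (A B₁ B₂ : Finset V) (R₁ R₂ : Set (Fin n → V))
    (hA1 : A ⊆ B₁) (hA2 : A ⊆ B₂) (hcap : B₁ ∩ B₂ = A)
    (hr1 : ∀ t ∈ R₁, ∀ i, t i ∈ B₁) (hr2 : ∀ t ∈ R₂, ∀ i, t i ∈ B₂)
    (hi1 : ∀ t ∈ R₁, Function.Injective t) (hi2 : ∀ t ∈ R₂, Function.Injective t)
    (hv1 : ∀ t ∈ R₁, ∀ σ ∈ G, t ∘ σ ∈ R₁) (hv2 : ∀ t ∈ R₂, ∀ σ ∈ G, t ∘ σ ∈ R₂)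
    (hcompat : {t | t ∈ R₁ ∧ ∀ i, t i ∈ A} = {t | t ∈ R₂ ∧ ∀ i, t i ∈ A}) :
    ({t | t ∈ R₁ ∪ R₂ ∧ ∀ i, t i ∈ B₁} = R₁ ∧
     {t | t ∈ R₁ ∪ R₂ ∧ ∀ i, t i ∈ B₂} = R₂) ∧
    (∀ X : Finset V, A ⊆ X → X ⊆ B₁ ∪ B₂ →
      deltaG G (R₁ ∪ R₂) X - deltaG G (R₁ ∪ R₂) A =
        (deltaG G (R₁ ∪ R₂) (X ∩ B₁) - deltaG G (R₁ ∪ R₂) A) +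
        (deltaG G (R₁ ∪ R₂) (X ∩ B₂) - deltaG G (R₁ ∪ R₂) A)) := by
  have hfin : ∀ Y : Finset V, (orbitsIn G (R₁ ∪ R₂) Y).Finite := by
    intro Y
    apply Set.Finite.subset ((Set.Finite.pi (fun _ : Fin n => Y.finite_toSet)).finite_subsets)
    rintro O ⟨t, ht, htY, rfl⟩
    rintro s ⟨σ, hσ, rfl⟩
    intro i _
    exact htY (σ i)
  have hmono : ∀ Y Z : Finset V, Y ⊆ Z →
      orbitsIn G (R₁ ∪ R₂) Y ⊆ orbitsIn G (R₁ ∪ R₂) Z := by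
    rintro Y Z hYZ O ⟨t, ht, htY, rfl⟩
    exact ⟨t, ht, fun i => hYZ (htY i), rfl⟩
  constructor
  · constructor
    · ext t
      simp only [Set.mem_setOf_eq, Set.mem_union]
      constructor
      · rintro ⟨ht | ht, htB⟩
        · exact ht
        · have : t ∈ {t | t ∈ R₂ ∧ ∀ i, t i ∈ A} := by
            refine ⟨ht, fun i => ?_⟩
            rw [← hcap]; exact Finset.mem_inter.2 ⟨htB i, hr2 t ht i⟩
          rw [← hcompat] at this
          exact this.1
      · exact fun ht => ⟨Or.inl ht, hr1 t ht⟩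
    · ext t
      simp only [Set.mem_setOf_eq, Set.mem_union]
      constructor
      · rintro ⟨ht | ht, htB⟩
        · have : t ∈ {t | t ∈ R₁ ∧ ∀ i, t i ∈ A} := by
            refine ⟨ht, fun i => ?_⟩
            rw [← hcap]; exact Finset.mem_inter.2 ⟨hr1 t ht i, htB i⟩
          rw [hcompat] at this
          exact this.1
        · exact ht
      · exact fun ht => ⟨Or.inr ht, hr2 t ht⟩
  · intro X hAX hXB
    -- set identities
    have hunion : orbitsIn G (R₁ ∪ R₂) X =
        orbitsIn G (R₁ ∪ R₂) (X ∩ B₁) ∪ orbitsIn G (R₁ ∪ R₂) (X ∩ B₂) := by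
      apply Set.Subset.antisymm
      · rintro O ⟨t, ht, htX, rfl⟩
        rcases ht with ht | ht
        · exact Or.inl ⟨t, Or.inl ht, fun i =>
            Finset.mem_inter.2 ⟨htX i, hr1 t ht i⟩, rfl⟩
        · exact Or.inr ⟨t, Or.inr ht, fun i =>
            Finset.mem_inter.2 ⟨htX i, hr2 t ht i⟩, rfl⟩
      · exact Set.union_subset (hmono _ _ Finset.inter_subset_left)
          (hmono _ _ Finset.inter_subset_left)
    have hinter : orbitsIn G (R₁ ∪ R₂) (X ∩ B₁) ∩ orbitsIn G (R₁ ∪ R₂) (X ∩ B₂) =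
        orbitsIn G (R₁ ∪ R₂) A := by
      apply Set.Subset.antisymm
      · rintro O ⟨⟨t₁, ht₁, ht₁X, rfl⟩, ⟨t₂, ht₂, ht₂X, hO⟩⟩
        have ht₂mem : t₂ ∈ {s | ∃ σ ∈ G, s = t₁ ∘ σ} := by
          rw [hO]; exact ⟨1, G.one_mem, by ext i; simp⟩
        obtain ⟨σ, hσ, hteq⟩ := ht₂mem
        refine ⟨t₂, ht₂, fun i => ?_, hO⟩
        have h1 : t₂ i ∈ X ∩ B₁ := by
          rw [hteq]; exact ht₁X (σ i)
        have h2 : t₂ i ∈ X ∩ B₂ := ht₂X i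
        rw [← hcap]
        exact Finset.mem_inter.2 ⟨(Finset.mem_inter.1 h1).2, (Finset.mem_inter.1 h2).2⟩
      · rintro O ⟨t, ht, htA, rfl⟩
        exact ⟨⟨t, ht, fun i => Finset.mem_inter.2 ⟨hAX (htA i), hA1 (htA i)⟩, rfl⟩,
               ⟨t, ht, fun i => Finset.mem_inter.2 ⟨hAX (htA i), hA2 (htA i)⟩, rfl⟩⟩
    -- finset identities
    have hXunion : (X ∩ B₁) ∪ (X ∩ B₂) = X := by
      rw [← Finset.inter_union_distrib_left]
      exact Finset.inter_eq_left.2 hXB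
    have hXinter : (X ∩ B₁) ∩ (X ∩ B₂) = A := by
      rw [Finset.inter_inter_inter_comm, Finset.inter_self, hcap]
      exact Finset.inter_eq_right.2 hAX
    have hcard : (X ∩ B₁).card + (X ∩ B₂).card = X.card + A.card := by
      rw [← Finset.card_union_add_card_inter, hXunion, hXinter]
    have hncard : (orbitsIn G (R₁ ∪ R₂) (X ∩ B₁)).ncard +
        (orbitsIn G (R₁ ∪ R₂) (X ∩ B₂)).ncard =
        (orbitsIn G (R₁ ∪ R₂) X).ncard + (orbitsIn G (R₁ ∪ R₂) A).ncard := by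
      rw [← Set.ncard_union_add_ncard_inter _ _ (hfin _) (hfin _), hinter, ← hunion]
    simp only [deltaG]
    omega
end

section
/- Let B₁ ∈ C₁ and B₂ ∈ C₂ be finite structures on the same universe B, with A ⊆ B self-sufficient in both (A ≤₁ B₁, A ≤₂ B₂), and suppose the dimension functions d₁, d₂ agree on all subsets of A. If Y ⊆ B is d-closed in B₁, then δ₁(Y ∩ A) = δ₂(Y ∩ A); and if additionally δ₁(Y) − δ₁(Y ∩ A) ≥ δ₂(Y) − δ₂(Y ∩ A), then d₁(X) ≥ d₂(X) for every X ⊆ B whose d-closure in B₁ is Y. -/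
/-- The dimension of `X` inside the ambient finite set `B`, with respect to the
predimension `δ`: the minimum of `δ(Z)` over `X ⊆ Z ⊆ B`. -/
noncomputable def dIn {V : Type*} (δ : Finset V → ℤ) (B X : Finset V) : ℤ :=
  sInf (δ '' {Z : Finset V | X ⊆ Z ∧ Z ⊆ B})

section Helpers

variable {V : Type*} {δ : Finset V → ℤ} {B : Finset V}

lemma dIn_finite_aux (X : Finset V) : {Z : Finset V | X ⊆ Z ∧ Z ⊆ B}.Finite :=
  Set.Finite.subset B.powerset.finite_toSet
    (fun Z hZ => Finset.mem_coe.mpr (Finset.mem_powerset.mpr hZ.2))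

lemma dIn_le {X Z : Finset V} (h1 : X ⊆ Z) (h2 : Z ⊆ B) : dIn δ B X ≤ δ Z :=
  csInf_le ((dIn_finite_aux X).image δ).bddBelow ⟨Z, ⟨h1, h2⟩, rfl⟩

lemma dIn_exists {X : Finset V} (hXB : X ⊆ B) :
    ∃ Z, X ⊆ Z ∧ Z ⊆ B ∧ δ Z = dIn δ B X := by
  have hne : (δ '' {Z : Finset V | X ⊆ Z ∧ Z ⊆ B}).Nonempty :=
    ⟨δ B, B, ⟨hXB, subset_rfl⟩, rfl⟩
  obtain ⟨Z, hZ, hδ⟩ := hne.csInf_mem ((dIn_finite_aux X).image δ)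
  exact ⟨Z, hZ.1, hZ.2, hδ⟩

lemma le_dIn {X : Finset V} {c : ℤ} (hXB : X ⊆ B)
    (h : ∀ Z, X ⊆ Z → Z ⊆ B → c ≤ δ Z) : c ≤ dIn δ B X := by
  have hne : (δ '' {Z : Finset V | X ⊆ Z ∧ Z ⊆ B}).Nonempty :=
    ⟨δ B, B, ⟨hXB, subset_rfl⟩, rfl⟩
  apply le_csInf hne
  rintro b ⟨Z, ⟨h1, h2⟩, rfl⟩
  exact h Z h1 h2

lemma dIn_mono {X X' : Finset V} (h : X ⊆ X') (hX'B : X' ⊆ B) :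
    dIn δ B X ≤ dIn δ B X' := by
  obtain ⟨Z, h1, h2, h3⟩ := dIn_exists hX'B
  exact h3 ▸ dIn_le (h.trans h1) h2

end Helpers

/-- Technical lemma for isomorphism of pregeometries: let `B₁, B₂` be two structures on
the same finite universe `B` with predimensions `δ₁, δ₂` (submodular), `A ⊆ B`
self-sufficient in both, and suppose the dimension functions `d₁, d₂` agree on subsets of
`A`.  If `Y ⊆ B` is d-closed in `B₁`, then `δ₁(Y ∩ A) = δ₂(Y ∩ A)`; if additionally
`δ₁(Y) − δ₁(Y ∩ A) ≥ δ₂(Y) − δ₂(Y ∩ A)`, then `d₁(X) ≥ d₂(X)` for every `X ⊆ B` whose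
d-closure in `B₁` is `Y`. -/
theorem stmt16 {V : Type*} [DecidableEq V] (δ₁ δ₂ : Finset V → ℤ) (B A Y : Finset V)
    (hsub1 : ∀ X Z : Finset V, X ⊆ B → Z ⊆ B → δ₁ (X ∪ Z) ≤ δ₁ X + δ₁ Z - δ₁ (X ∩ Z))
    (hsub2 : ∀ X Z : Finset V, X ⊆ B → Z ⊆ B → δ₂ (X ∪ Z) ≤ δ₂ X + δ₂ Z - δ₂ (X ∩ Z))
    (hAB : A ⊆ B)
    (hself1 : ∀ X : Finset V, A ⊆ X → X ⊆ B → δ₁ A ≤ δ₁ X)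
    (hself2 : ∀ X : Finset V, A ⊆ X → X ⊆ B → δ₂ A ≤ δ₂ X)
    (hagree : ∀ X : Finset V, X ⊆ A → dIn δ₁ B X = dIn δ₂ B X)
    (hYB : Y ⊆ B)
    (hYclosed : ∀ a ∈ B, dIn δ₁ B (insert a Y) = dIn δ₁ B Y → a ∈ Y) :
    δ₁ (Y ∩ A) = δ₂ (Y ∩ A) ∧
    (δ₂ Y - δ₂ (Y ∩ A) ≤ δ₁ Y - δ₁ (Y ∩ A) →
      ∀ X : Finset V, X ⊆ B →
        (∀ a, a ∈ Y ↔ a ∈ B ∧ dIn δ₁ B (insert a X) = dIn δ₁ B X) →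
        dIn δ₂ B X ≤ dIn δ₁ B X) := by
  have hYAB : Y ∩ A ⊆ B := (Finset.inter_subset_left).trans hYB
  -- Step A: δ₁ Y = dIn δ₁ B Y, hence Y is self-sufficient in B₁.
  have hY1 : δ₁ Y = dIn δ₁ B Y := by
    obtain ⟨Z₀, hYZ₀, hZ₀B, hδZ₀⟩ := dIn_exists (δ := δ₁) hYB
    have hZ₀Y : Z₀ ⊆ Y := by
      intro a ha
      refine hYclosed a (hZ₀B ha) (le_antisymm ?_ (dIn_mono (Finset.subset_insert a Y)
        (Finset.insert_subset (hZ₀B ha) hYB)))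
      calc dIn δ₁ B (insert a Y) ≤ δ₁ Z₀ :=
            dIn_le (Finset.insert_subset ha hYZ₀) hZ₀B
        _ = dIn δ₁ B Y := hδZ₀
    rw [← Finset.Subset.antisymm hYZ₀ hZ₀Y] at hδZ₀
    exact hδZ₀
  have hYss : ∀ Z, Y ⊆ Z → Z ⊆ B → δ₁ Y ≤ δ₁ Z := fun Z h1 h2 => by
    rw [hY1]; exact dIn_le h1 h2
  -- Step B: intersection lemmas.
  have h1A : ∀ Z, Z ⊆ B → δ₁ (A ∩ Z) ≤ δ₁ Z := by
    intro Z hZ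
    have := hsub1 A Z hAB hZ
    have := hself1 (A ∪ Z) Finset.subset_union_left (Finset.union_subset hAB hZ)
    linarith
  have h2A : ∀ Z, Z ⊆ B → δ₂ (A ∩ Z) ≤ δ₂ Z := by
    intro Z hZ
    have := hsub2 A Z hAB hZ
    have := hself2 (A ∪ Z) Finset.subset_union_left (Finset.union_subset hAB hZ)
    linarith
  have h1Y : ∀ Z, Z ⊆ B → δ₁ (Y ∩ Z) ≤ δ₁ Z := by
    intro Z hZ
    have := hsub1 Y Z hYB hZ
    have := hYss (Y ∪ Z) Finset.subset_union_left (Finset.union_subset hYB hZ)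
    linarith
  -- Step C: Y ∩ A is self-sufficient in B₁.
  have hYA1 : ∀ Z, Y ∩ A ⊆ Z → Z ⊆ B → δ₁ (Y ∩ A) ≤ δ₁ Z := by
    intro Z h1 h2
    have hYZB : Y ∩ Z ⊆ B := (Finset.inter_subset_left).trans hYB
    have heq : A ∩ (Y ∩ Z) = Y ∩ A := by
      apply Finset.Subset.antisymm
      · intro x hx
        simp only [Finset.mem_inter] at hx ⊢
        exact ⟨hx.2.1, hx.1⟩
      · intro x hx
        simp only [Finset.mem_inter] at hx ⊢
        exact ⟨hx.2, hx.1, h1 (Finset.mem_inter.mpr hx)⟩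
    calc δ₁ (Y ∩ A) = δ₁ (A ∩ (Y ∩ Z)) := by rw [heq]
      _ ≤ δ₁ (Y ∩ Z) := h1A _ hYZB
      _ ≤ δ₁ Z := h1Y _ h2
  have hd1YA : dIn δ₁ B (Y ∩ A) = δ₁ (Y ∩ A) :=
    le_antisymm (dIn_le subset_rfl hYAB) (le_dIn hYAB hYA1)
  -- Step D/E/F: δ₂ (Y ∩ A) = δ₁ (Y ∩ A).
  have hd2YA : dIn δ₂ B (Y ∩ A) = δ₁ (Y ∩ A) := by
    rw [← hagree _ Finset.inter_subset_right, hd1YA]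
  have part1 : δ₁ (Y ∩ A) = δ₂ (Y ∩ A) := by
    -- Find a minimizer W of dIn δ₂ B (Y∩A) with Y∩A ⊆ W ⊆ A; show W = Y∩A.
    obtain ⟨Z, hZ1, hZ2, hZ3⟩ := dIn_exists (δ := δ₂) hYAB
    set W := A ∩ Z with hW
    have hWA : W ⊆ A := Finset.inter_subset_left
    have hWB : W ⊆ B := hWA.trans hAB
    have hYAW : Y ∩ A ⊆ W := fun x hx =>
      Finset.mem_inter.mpr ⟨(Finset.mem_inter.mp hx).2, hZ1 hx⟩
    have hδW : δ₂ W = dIn δ₂ B (Y ∩ A) :=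
      le_antisymm (le_of_le_of_eq (h2A Z hZ2) hZ3) (dIn_le hYAW hWB)
    have hWY : W ⊆ Y := by
      intro a ha
      -- dIn δ₂ B (insert a (Y∩A)) = dIn δ₂ B (Y∩A)
      have hiB : insert a (Y ∩ A) ⊆ B := Finset.insert_subset (hWB ha) hYAB
      have hiA : insert a (Y ∩ A) ⊆ A := Finset.insert_subset (hWA ha) Finset.inter_subset_right
      have h2eq : dIn δ₂ B (insert a (Y ∩ A)) = dIn δ₂ B (Y ∩ A) := by
        refine le_antisymm ?_ (dIn_mono (Finset.subset_insert _ _) hiB)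
        calc dIn δ₂ B (insert a (Y ∩ A)) ≤ δ₂ W :=
              dIn_le (Finset.insert_subset ha hYAW) hWB
          _ = dIn δ₂ B (Y ∩ A) := hδW
      have h1eq : dIn δ₁ B (insert a (Y ∩ A)) = δ₁ (Y ∩ A) := by
        rw [hagree _ hiA, h2eq, hd2YA]
      obtain ⟨Z', hZ'1, hZ'2, hZ'3⟩ := dIn_exists (δ := δ₁) hiB
      rw [h1eq] at hZ'3
      -- δ₁ (Y ∪ Z') ≤ δ₁ Y
      have hYA_YZ' : Y ∩ A ⊆ Y ∩ Z' := fun x hx => Finset.mem_inter.mpr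
        ⟨(Finset.mem_inter.mp hx).1, hZ'1 (Finset.mem_insert_of_mem hx)⟩
      have hYZ'B : Y ∩ Z' ⊆ B := (Finset.inter_subset_left).trans hYB
      have hsm := hsub1 Y Z' hYB hZ'2
      have hlow := hYA1 (Y ∩ Z') hYA_YZ' hYZ'B
      have hunion : δ₁ (Y ∪ Z') ≤ δ₁ Y := by linarith [hZ'3 ▸ hsm]
      refine hYclosed a (hWB ha) (le_antisymm ?_ (dIn_mono (Finset.subset_insert a Y)
        (Finset.insert_subset (hWB ha) hYB)))
      calc dIn δ₁ B (insert a Y) ≤ δ₁ (Y ∪ Z') :=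
            dIn_le (Finset.insert_subset
              (Finset.mem_union_right _ (hZ'1 (Finset.mem_insert_self a _)))
              Finset.subset_union_left) (Finset.union_subset hYB hZ'2)
        _ ≤ δ₁ Y := hunion
        _ = dIn δ₁ B Y := hY1
    have hWeq : W = Y ∩ A := Finset.Subset.antisymm
      (fun x hx => Finset.mem_inter.mpr ⟨hWY hx, hWA hx⟩) hYAW
    rw [← hd2YA, ← hδW, hWeq]
  refine ⟨part1, ?_⟩
  -- Part 2.
  intro hΔ X hXB hcl
  have hXY : X ⊆ Y := fun a ha => (hcl a).mpr
    ⟨hXB ha, by rw [Finset.insert_eq_self.mpr ha]⟩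
  -- any minimizer for X is contained in Y
  have minY : ∀ Z, X ⊆ Z → Z ⊆ B → δ₁ Z = dIn δ₁ B X → Z ⊆ Y := by
    intro Z h1 h2 h3 b hb
    refine (hcl b).mpr ⟨h2 hb, le_antisymm ?_ (dIn_mono (Finset.subset_insert b X)
      (Finset.insert_subset (h2 hb) hXB))⟩
    calc dIn δ₁ B (insert b X) ≤ δ₁ Z := dIn_le (Finset.insert_subset hb h1) h2
      _ = dIn δ₁ B X := h3
  -- key: δ₁ Y = dIn δ₁ B X
  have key : δ₁ Y = dIn δ₁ B X := by
    have step : ∀ n : ℕ, ∀ W : Finset V, (Y \ W).card = n → X ⊆ W → W ⊆ Y →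
        δ₁ W = dIn δ₁ B X → δ₁ Y = dIn δ₁ B X := by
      intro n
      induction n using Nat.strong_induction_on with
      | _ n ih =>
        intro W hcard hXW hWY hδW
        by_cases hYW : Y ⊆ W
        · rwa [Finset.Subset.antisymm hYW hWY]
        · obtain ⟨a, haY, haW⟩ := Finset.not_subset.mp hYW
          have haX : dIn δ₁ B (insert a X) = dIn δ₁ B X := ((hcl a).mp haY).2
          obtain ⟨Z', hZ'1, hZ'2, hZ'3⟩ :=
            dIn_exists (δ := δ₁) (Finset.insert_subset (hYB haY) hXB)
          rw [haX] at hZ'3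
          have hZ'Y : Z' ⊆ Y := minY Z' ((Finset.subset_insert a X).trans hZ'1) hZ'2 hZ'3
          set W' := W ∪ Z' with hW'
          have hXW' : X ⊆ W' := hXW.trans Finset.subset_union_left
          have hW'Y : W' ⊆ Y := Finset.union_subset hWY hZ'Y
          have hW'B : W' ⊆ B := hW'Y.trans hYB
          have hδW' : δ₁ W' = dIn δ₁ B X := by
            have hsm := hsub1 W Z' (hWY.trans hYB) hZ'2
            have hint : dIn δ₁ B X ≤ δ₁ (W ∩ Z') :=
              dIn_le (fun x hx => Finset.mem_inter.mpr
                ⟨hXW hx, hZ'1 (Finset.mem_insert_of_mem hx)⟩)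
                ((Finset.inter_subset_left).trans (hWY.trans hYB))
            have hge : dIn δ₁ B X ≤ δ₁ W' := dIn_le hXW' hW'B
            refine le_antisymm ?_ hge
            calc δ₁ W' ≤ δ₁ W + δ₁ Z' - δ₁ (W ∩ Z') := hsm
              _ ≤ dIn δ₁ B X := by rw [hδW, hZ'3]; linarith
          have hcard' : (Y \ W').card < n := by
            rw [← hcard]
            apply Finset.card_lt_card
            constructor
            · exact Finset.sdiff_subset_sdiff subset_rfl Finset.subset_union_left
            · intro hsub
              have : a ∈ Y \ W := Finset.mem_sdiff.mpr ⟨haY, haW⟩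
              have := hsub this
              rw [Finset.mem_sdiff] at this
              exact this.2 (Finset.mem_union_right _ (hZ'1 (Finset.mem_insert_self a _)))
          exact ih _ hcard' W' rfl hXW' hW'Y hδW'
    obtain ⟨Z₀, hZ₀1, hZ₀2, hZ₀3⟩ := dIn_exists (δ := δ₁) hXB
    exact step _ (Z₀) rfl hZ₀1 (minY Z₀ hZ₀1 hZ₀2 hZ₀3) hZ₀3
  have h2 : dIn δ₂ B X ≤ δ₂ Y := dIn_le hXY hYB
  linarith [key, part1]
end

section
/- Let M be a structure with a symmetric n-ary relation whose age possibly fails to satisfy δ ≥ 0, B ⊆ M finite, R a set of related symmetric n-tuples of B, and let (ā₁b̄₁, …, ā_k b̄_k) be an R-adjacency-chain with respect to an intertwined, asocial exquisite formula q̂. Then |B ∪ ⋃ᵢ set(āᵢb̄ᵢ)| − |R ∪ ⋃ᵢ G^q(āᵢ;b̄ᵢ)| ≤ |B| − |R|, and the inequality is strict if the chain is a proper R-adjacency-loop. -/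
open Finset

private def acc {α : Type*} [DecidableEq α] (B : Finset α) (S : ℕ → Finset α) (m : ℕ) :
    Finset α :=
  B ∪ (Finset.range m).biUnion S

private lemma mem_acc {α : Type*} [DecidableEq α] {B : Finset α} {S : ℕ → Finset α}
    {m : ℕ} {a : α} : a ∈ acc B S m ↔ a ∈ B ∨ ∃ i, i < m ∧ a ∈ S i := by
  simp [acc]

private lemma acc_succ {α : Type*} [DecidableEq α] (B : Finset α) (S : ℕ → Finset α)
    (m : ℕ) : acc B S (m+1) = acc B S m ∪ S m := by
  ext a
  simp only [mem_acc, Finset.mem_union]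
  constructor
  · rintro (h | ⟨i, hi, h⟩)
    · exact Or.inl (Or.inl h)
    · rcases Nat.lt_succ_iff_lt_or_eq.mp hi with h' | rfl
      · exact Or.inl (Or.inr ⟨i, h', h⟩)
      · exact Or.inr h
  · rintro ((h | ⟨i, hi, h⟩) | h)
    · exact Or.inl h
    · exact Or.inr ⟨i, by omega, h⟩
    · exact Or.inr ⟨m, by omega, h⟩

private lemma acc_zero {α : Type*} [DecidableEq α] (B : Finset α) (S : ℕ → Finset α) :
    acc B S 0 = B := by simp [acc]

private lemma card_lt_of_two_subsets {α : Type*} [DecidableEq α] {X a b : Finset α} {n : ℕ}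
    (ha : a ⊆ X) (hb : b ⊆ X) (hca : a.card = n) (hcb : b.card = n) (hne : a ≠ b) :
    n < X.card := by
  by_contra h
  push_neg at h
  have h1 : a = X := Finset.eq_of_subset_of_card_le ha (by omega)
  have h2 : b = X := Finset.eq_of_subset_of_card_le hb (by omega)
  exact hne (h1.trans h2.symm)

private theorem chain_aux {V : Type*} [DecidableEq V] (n k : ℕ) (hn : 3 ≤ n) (hk : 0 < k)
    (Rel : Set (Finset V)) (hRel : ∀ s ∈ Rel, s.card = n)
    (B : Finset V) (R : Finset (Finset V))
    (hR : ∀ s ∈ R, s ∈ Rel ∧ s ⊆ B)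
    (S : ℕ → Finset V) (Gq : ℕ → Finset (Finset V))
    (hG : ∀ i, i < k → ∀ s ∈ Gq i, s ∈ Rel ∧ s ⊆ S i)
    (hbig : ∀ i, i < k → 3 * n ≤ (S i).card)
    (hdim : ∀ i, i < k → ((S i).card : ℤ) - ((Gq i).card : ℤ) = (n : ℤ) - 1)
    (hint : ∀ i, i < k → ∀ X : Finset V, X ⊆ S i → X ≠ S i → n < X.card →
      ((S i).card : ℤ) - ((Gq i).card : ℤ) <
        (X.card : ℤ) - (((Gq i).filter (fun s => s ⊆ X)).card : ℤ))
    (hasoc : ∀ i, i < k → ∀ j, j < k → i ≠ j → (Gq i ∩ Gq j).card ≤ 1)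
    (hadj0 : (Gq 0 ∩ R).Nonempty)
    (hadj : ∀ i, i + 1 < k → (Gq i ∩ Gq (i+1)).Nonempty) :
    (((acc B S k).card : ℤ) - ((acc R Gq k).card : ℤ) ≤ (B.card : ℤ) - (R.card : ℤ)) ∧
    (((k = 1 → 2 ≤ (R ∩ Gq 0).card) ∧
      (1 < k → ∃ r : Finset V, Gq (k-2) ∩ Gq (k-1) = {r} ∧
        (Gq (k-1) ∩ ((R ∪ (Finset.range (k-2)).biUnion Gq).erase r)).Nonempty) ∧
      ¬ Gq (k-1) ⊆ R) →
      ((acc B S k).card : ℤ) - ((acc R Gq k).card : ℤ) < (B.card : ℤ) - (R.card : ℤ)) := by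
  -- tuples accumulated so far lie inside the points accumulated so far
  have hL0 : ∀ m, m ≤ k → ∀ v ∈ acc R Gq m, v ⊆ acc B S m := by
    intro m hm v hv
    rcases mem_acc.mp hv with h | ⟨i, hi, h⟩
    · exact fun x hx => mem_acc.mpr (Or.inl ((hR v h).2 hx))
    · exact fun x hx => mem_acc.mpr (Or.inr ⟨i, hi, (hG i (by omega) v h).2 hx⟩)
  -- each instance has a link tuple already present
  have hlink : ∀ m, m < k → ∃ u, u ∈ Gq m ∧ u ∈ acc R Gq m := by
    intro m hm
    cases m with
    | zero =>
      obtain ⟨u, hu⟩ := hadj0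
      rw [Finset.mem_inter] at hu
      exact ⟨u, hu.1, mem_acc.mpr (Or.inl hu.2)⟩
    | succ m' =>
      obtain ⟨u, hu⟩ := hadj m' hm
      rw [Finset.mem_inter] at hu
      exact ⟨u, hu.2, mem_acc.mpr (Or.inr ⟨m', by omega, hu.1⟩)⟩
  -- the per-step lemma
  have hstep : ∀ m, m < k →
      (((acc B S (m+1)).card : ℤ) - ((acc R Gq (m+1)).card : ℤ) ≤
        ((acc B S m).card : ℤ) - ((acc R Gq m).card : ℤ)) ∧
      ((((acc B S (m+1)).card : ℤ) - ((acc R Gq (m+1)).card : ℤ) =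
        ((acc B S m).card : ℤ) - ((acc R Gq m).card : ℤ)) →
        ((∀ g ∈ Gq m, g ⊆ acc B S m → g ∈ acc R Gq m) ∧
         (∀ a b : Finset V, a ∈ Gq m → a ∈ acc R Gq m → b ∈ Gq m → b ∈ acc R Gq m →
            a ≠ b → S m ⊆ acc B S m ∧ Gq m ⊆ acc R Gq m))) := by
    intro m hm
    have c1 : ((acc B S m ∪ S m).card) = (S m \ acc B S m).card + (acc B S m).card := by
      rw [Finset.union_comm]
      exact (Finset.card_sdiff_add_card _ _).symm
    have c2 : (S m ∩ acc B S m).card + (S m \ acc B S m).card = (S m).card :=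
      Finset.card_inter_add_card_sdiff _ _
    have c3 : ((acc R Gq m ∪ Gq m).card) = (Gq m \ acc R Gq m).card + (acc R Gq m).card := by
      rw [Finset.union_comm]
      exact (Finset.card_sdiff_add_card _ _).symm
    have c4 : (Gq m ∩ acc R Gq m).card + (Gq m \ acc R Gq m).card = (Gq m).card :=
      Finset.card_inter_add_card_sdiff _ _
    rw [acc_succ B S m, acc_succ R Gq m]
    by_cases hXS : S m ∩ acc B S m = S m
    · -- all points old
      have hsub : S m ⊆ acc B S m := Finset.inter_eq_left.mp hXS
      have hsd : (S m \ acc B S m).card = 0 := by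
        rw [Finset.card_eq_zero, Finset.sdiff_eq_empty_iff_subset]
        exact hsub
      constructor
      · omega
      · intro heq
        have h0 : (Gq m \ acc R Gq m).card = 0 := by omega
        have hsub2 : Gq m ⊆ acc R Gq m := by
          intro g hg
          by_contra hg2
          have : g ∈ Gq m \ acc R Gq m := Finset.mem_sdiff.mpr ⟨hg, hg2⟩
          rw [Finset.card_eq_zero] at h0
          simp [h0] at this
        exact ⟨fun g hg _ => hsub2 hg, fun _ _ _ _ _ _ _ => ⟨hsub, hsub2⟩⟩
    · by_cases hXn : (S m ∩ acc B S m).card ≤ n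
      · -- exactly one old tuple, exactly n old points
        obtain ⟨u, huG, huR⟩ := hlink m hm
        have huS : u ⊆ S m := (hG m hm u huG).2
        have huB : u ⊆ acc B S m := hL0 m hm.le u huR
        have huX : u ⊆ S m ∩ acc B S m := Finset.subset_inter huS huB
        have hun : u.card = n := hRel u (hG m hm u huG).1
        have hXu : u = S m ∩ acc B S m :=
          Finset.eq_of_subset_of_card_le huX (by omega)
        have hXcard : (S m ∩ acc B S m).card = n := by rw [← hXu]; exact hun
        have hsingle : ∀ v, v ∈ Gq m → v ⊆ acc B S m → v = u := by
          intro v hv1 hv2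
          have hvX : v ⊆ S m ∩ acc B S m :=
            Finset.subset_inter ((hG m hm v hv1).2) hv2
          have hvn : v.card = n := hRel v (hG m hm v hv1).1
          have : v = S m ∩ acc B S m :=
            Finset.eq_of_subset_of_card_le hvX (by omega)
          rw [this, ← hXu]
        have hcap : Gq m ∩ acc R Gq m = {u} := by
          ext v
          simp only [Finset.mem_inter, Finset.mem_singleton]
          constructor
          · rintro ⟨h1, h2⟩
            exact hsingle v h1 (hL0 m hm.le v h2)
          · rintro rfl
            exact ⟨huG, huR⟩
        have hcapc : (Gq m ∩ acc R Gq m).card = 1 := by rw [hcap]; simp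
        have hd := hdim m hm
        constructor
        · omega
        · intro _
          refine ⟨fun g hg hgB => ?_, fun a b ha1 ha2 hb1 hb2 hab => ?_⟩
          · rw [hsingle g hg hgB]; exact huR
          · exact absurd ((hsingle a ha1 (hL0 m hm.le a ha2)).trans
              (hsingle b hb1 (hL0 m hm.le b hb2)).symm) hab
      · -- intertwinedness gives a strict drop
        push_neg at hXn
        have hkey := hint m hm (S m ∩ acc B S m) Finset.inter_subset_left hXS hXn
        have hcle : (Gq m ∩ acc R Gq m).card ≤
            ((Gq m).filter (fun s => s ⊆ S m ∩ acc B S m)).card := by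
          apply Finset.card_le_card
          intro v hv
          rw [Finset.mem_inter] at hv
          exact Finset.mem_filter.mpr ⟨hv.1,
            Finset.subset_inter ((hG m hm v hv.1).2) (hL0 m hm.le v hv.2)⟩
        constructor
        · omega
        · intro heq
          exfalso
          omega
  -- monotonicity of the defect along the chain
  have hchain : ∀ a b : ℕ, a ≤ b → b ≤ k →
      ((acc B S b).card : ℤ) - ((acc R Gq b).card : ℤ) ≤
      ((acc B S a).card : ℤ) - ((acc R Gq a).card : ℤ) := by
    intro a b
    induction b with
    | zero =>
      intro h1 _
      have : a = 0 := by omega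
      subst this
      exact le_refl _
    | succ b ih =>
      intro h1 h2
      rcases Nat.eq_or_lt_of_le h1 with rfl | hlt
      · exact le_refl _
      · exact le_trans ((hstep b (by omega)).1) (ih (by omega) (by omega))
  have hB0 : acc B S 0 = B := acc_zero B S
  have hR0 : acc R Gq 0 = R := acc_zero R Gq
  have hpart1 : ((acc B S k).card : ℤ) - ((acc R Gq k).card : ℤ) ≤
      (B.card : ℤ) - (R.card : ℤ) := by
    have := hchain 0 k (by omega) (le_refl k)
    rwa [hB0, hR0] at this
  refine ⟨hpart1, ?_⟩
  rintro ⟨hl1, hl2, hl3⟩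
  by_contra hnlt
  push_neg at hnlt
  have htot : ((acc B S k).card : ℤ) - ((acc R Gq k).card : ℤ) =
      (B.card : ℤ) - (R.card : ℤ) := le_antisymm hpart1 hnlt
  -- every step is an equality
  have hEq : ∀ m, m < k →
      ((acc B S (m+1)).card : ℤ) - ((acc R Gq (m+1)).card : ℤ) =
      ((acc B S m).card : ℤ) - ((acc R Gq m).card : ℤ) := by
    intro m hm
    have h1 := (hstep m hm).1
    have h2 := hchain 0 m (by omega) (by omega)
    have h3 := hchain (m+1) k (by omega) (le_refl k)
    rw [hB0, hR0] at h2
    omega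
  have hCZ : ∀ p, p < k → ∀ g ∈ Gq p, g ⊆ acc B S p → g ∈ acc R Gq p :=
    fun p hp => ((hstep p hp).2 (hEq p hp)).1
  have hMk : k - 1 < k := by omega
  -- two distinct old tuples at the last instance
  have hrs : ∃ r s : Finset V, r ∈ Gq (k-1) ∧ r ∈ acc R Gq (k-1) ∧
      s ∈ Gq (k-1) ∧ s ∈ acc R Gq (k-1) ∧ r ≠ s := by
    by_cases hk1 : k = 1
    · have h2 := hl1 hk1
      have hcc : 1 < (R ∩ Gq 0).card := by omega
      obtain ⟨a, ha, b, hb, hab⟩ := Finset.one_lt_card.mp hcc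
      rw [Finset.mem_inter] at ha hb
      have hk0 : k - 1 = 0 := by omega
      rw [hk0]
      exact ⟨a, b, ha.2, mem_acc.mpr (Or.inl ha.1), hb.2, mem_acc.mpr (Or.inl hb.1), hab⟩
    · obtain ⟨r, hre, ⟨s, hs⟩⟩ := hl2 (by omega)
      rw [Finset.mem_inter] at hs
      have hs1 := hs.1
      have hsr : s ≠ r := Finset.ne_of_mem_erase hs.2
      have hs3 := Finset.mem_of_mem_erase hs.2
      have hrmem : r ∈ Gq (k-2) ∩ Gq (k-1) := by
        rw [hre]; exact Finset.mem_singleton_self r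
      rw [Finset.mem_inter] at hrmem
      refine ⟨r, s, hrmem.2, mem_acc.mpr (Or.inr ⟨k-2, by omega, hrmem.1⟩), hs1, ?_, hsr.symm⟩
      rcases Finset.mem_union.mp hs3 with h | h
      · exact mem_acc.mpr (Or.inl h)
      · obtain ⟨i, hi, hsi⟩ := Finset.mem_biUnion.mp h
        rw [Finset.mem_range] at hi
        exact mem_acc.mpr (Or.inr ⟨i, by omega, hsi⟩)
  obtain ⟨r, s, hr1, hr2, hs1, hs2, hrs'⟩ := hrs
  obtain ⟨hJ1, hJ2⟩ :=
    ((hstep (k-1) hMk).2 (hEq (k-1) hMk)).2 r s hr1 hr2 hs1 hs2 hrs'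
  obtain ⟨t, htG, htR⟩ := Finset.not_subset.mp hl3
  have hGMcard : (2 : ℤ) * n + 1 ≤ ((Gq (k-1)).card : ℤ) := by
    have h1 := hdim (k-1) hMk
    have h2 := hbig (k-1) hMk
    omega
  -- peeling one instance at a time
  have hpeel : ∀ p, p < k - 1 → S (k-1) ⊆ acc B S (p+1) → Gq (k-1) ⊆ acc R Gq (p+1) →
      S (k-1) ⊆ acc B S p ∧ Gq (k-1) ⊆ acc R Gq p := by
    intro p hp hQ1 hQ2
    have hpk : p < k := by omega
    have hF : ∀ w, w ∈ Gq (k-1) → w ∉ Gq p → w ⊆ S (k-1) ∩ acc B S p := by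
      intro w hw hwp
      refine Finset.subset_inter ((hG (k-1) hMk w hw).2) ?_
      rcases mem_acc.mp (hQ2 hw) with h | ⟨i, hi, h⟩
      · exact fun x hx => mem_acc.mpr (Or.inl ((hR w h).2 hx))
      · rcases Nat.lt_succ_iff_lt_or_eq.mp hi with h' | rfl
        · exact fun x hx => mem_acc.mpr (Or.inr ⟨i, h', (hG i (by omega) w h).2 hx⟩)
        · exact absurd h hwp
    have hc2 : (Gq (k-1) ∩ Gq p).card + (Gq (k-1) \ Gq p).card = (Gq (k-1)).card :=
      Finset.card_inter_add_card_sdiff _ _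
    have hc3 : (Gq (k-1) ∩ Gq p).card ≤ 1 := hasoc (k-1) hMk p hpk (by omega)
    have hsd : 1 < (Gq (k-1) \ Gq p).card := by omega
    obtain ⟨w₁, hw₁, w₂, hw₂, hww⟩ := Finset.one_lt_card.mp hsd
    rw [Finset.mem_sdiff] at hw₁ hw₂
    have hXcard : n < (S (k-1) ∩ acc B S p).card :=
      card_lt_of_two_subsets (hF w₁ hw₁.1 hw₁.2) (hF w₂ hw₂.1 hw₂.2)
        (hRel w₁ (hG (k-1) hMk w₁ hw₁.1).1) (hRel w₂ (hG (k-1) hMk w₂ hw₂.1).1) hww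
    have hXS : S (k-1) ∩ acc B S p = S (k-1) := by
      by_contra hne
      have hkey := hint (k-1) hMk (S (k-1) ∩ acc B S p) Finset.inter_subset_left hne hXcard
      have hfil : (Gq (k-1) \ Gq p) ⊆
          (Gq (k-1)).filter (fun v => v ⊆ S (k-1) ∩ acc B S p) := by
        intro v hv
        rw [Finset.mem_sdiff] at hv
        exact Finset.mem_filter.mpr ⟨hv.1, hF v hv.1 hv.2⟩
      have hc1 := Finset.card_le_card hfil
      have hc4 := hdim (k-1) hMk
      have hc5 : (S (k-1) ∩ acc B S p).card ≤ (S (k-1)).card :=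
        Finset.card_le_card Finset.inter_subset_left
      have hge : (S (k-1)).card ≤ (S (k-1) ∩ acc B S p).card := by omega
      exact hne (Finset.eq_of_subset_of_card_le Finset.inter_subset_left hge)
    have hJ1' : S (k-1) ⊆ acc B S p := Finset.inter_eq_left.mp hXS
    refine ⟨hJ1', ?_⟩
    intro w hw
    rcases mem_acc.mp (hQ2 hw) with h | ⟨i, hi, h⟩
    · exact mem_acc.mpr (Or.inl h)
    · rcases Nat.lt_succ_iff_lt_or_eq.mp hi with h' | rfl
      · exact mem_acc.mpr (Or.inr ⟨i, h', h⟩)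
      · exact hCZ i hpk w h (Finset.Subset.trans ((hG (k-1) hMk w hw).2) hJ1')
  -- descend to the bottom
  have hdesc : ∀ j, j ≤ k - 1 → S (k-1) ⊆ acc B S j → Gq (k-1) ⊆ acc R Gq j → False := by
    intro j
    induction j with
    | zero =>
      intro _ _ h2
      have := h2 htG
      rcases mem_acc.mp this with h | ⟨i, hi, _⟩
      · exact htR h
      · omega
    | succ j ih =>
      intro hj h1 h2
      obtain ⟨g1, g2⟩ := hpeel j (by omega) h1 h2
      exact ih (by omega) g1 g2
  exact hdesc (k-1) (le_refl _) hJ1 hJ2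
/-- **Adjacency-chain lemma.**  Ambient structure: a symmetric `n`-ary relation on `V`,
modelled as a set `Rel` of `n`-element subsets of `V`.  An instance `i` of the exquisite
atomic type `q̂` is recorded by the finite set `S i` of its points (`set(āᵢb̄ᵢ)`) and the
finite set `Gq i` of symmetric tuples it generates (`G^q(āᵢ;b̄ᵢ)`); the hypotheses express
that `q` is nice (`|S| ≥ 3n`, `|S| − |Gq| = n − 1`, the tuples of `Gq i` are exactly the
related tuples inside `S i`), intertwined, without large overlaps and asocial (distinct
instances overlap in at most `n` points and share at most one generated tuple).
`B` is a finite set and `R` a set of related symmetric tuples of `B`, and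
`(S 0, Gq 0), …, (S (k−1), Gq (k−1))` is an `R`-adjacency-chain.  Then
`|B ∪ ⋃ᵢ Sᵢ| − |R ∪ ⋃ᵢ Gqᵢ| ≤ |B| − |R|`, and the inequality is strict whenever the
chain is a proper `R`-adjacency-loop. -/
theorem stmt19 {V : Type*} [DecidableEq V] (n k : ℕ) (hn : 3 ≤ n) (hk : 0 < k)
    (Rel : Set (Finset V))
    (hRel : ∀ s ∈ Rel, s.card = n)
    (B : Finset V) (R : Finset (Finset V))
    (hR : ∀ s ∈ R, s ∈ Rel ∧ s ⊆ B)
    (S : Fin k → Finset V) (Gq : Fin k → Finset (Finset V))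
    -- each instance generates related tuples inside its point set
    (hG : ∀ i, ∀ s ∈ Gq i, s ∈ Rel ∧ s ⊆ S i)
    -- completeness of the atomic type: the related tuples inside `S i` are exactly `Gq i`
    (hcomplete : ∀ i, ∀ s ∈ Rel, s ⊆ S i → s ∈ Gq i)
    -- niceness: `|x̄| = n`, `|ȳ| ≥ 2n`, so `|S i| ≥ 3n`, and `d_q = |S| − |Gq| = n − 1`
    (hbig : ∀ i, 3 * n ≤ (S i).card)
    (hdim : ∀ i, ((S i).card : ℤ) - ((Gq i).card : ℤ) = (n : ℤ) - 1)
    -- intertwinedness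
    (hintertwined : ∀ i, ∀ X : Finset V, X ⊆ S i → X ≠ S i → n < X.card →
      ((S i).card : ℤ) - ((Gq i).card : ℤ) <
        (X.card : ℤ) - (((Gq i).filter (fun s => s ⊆ X)).card : ℤ))
    -- the instances of the chain are pairwise distinct
    (hdistinct : ∀ i j : Fin k, i ≠ j → (S i, Gq i) ≠ (S j, Gq j))
    -- `q̂`: distinct instances overlap in at most `n` points
    (hoverlap : ∀ i j : Fin k, i ≠ j → (S i ∩ S j).card ≤ n)
    -- asociality: distinct instances share at most one generated symmetric tuple
    (hasocial : ∀ i j : Fin k, i ≠ j → (Gq i ∩ Gq j).card ≤ 1)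
    -- `R`-adjacency-chain: first instance adjacent to `R`, consecutive instances adjacent
    (hadj0 : (Gq ⟨0, hk⟩ ∩ R).Nonempty)
    (hadj : ∀ (i : ℕ) (h : i + 1 < k),
      (Gq ⟨i, by omega⟩ ∩ Gq ⟨i + 1, h⟩).Nonempty) :
    (((B ∪ Finset.univ.biUnion S).card : ℤ) -
        ((R ∪ Finset.univ.biUnion Gq).card : ℤ) ≤ (B.card : ℤ) - (R.card : ℤ)) ∧
    -- and strictly, if the chain is a proper `R`-adjacency-loop:
    (((k = 1 → 2 ≤ (R ∩ Gq ⟨0, hk⟩).card) ∧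
      (∀ h1 : 1 < k, ∃ r : Finset V,
        Gq ⟨k - 2, by omega⟩ ∩ Gq ⟨k - 1, by omega⟩ = {r} ∧
        (Gq ⟨k - 1, by omega⟩ ∩
          ((R ∪ (Finset.univ.filter (fun i : Fin k => (i : ℕ) < k - 2)).biUnion Gq).erase
            r)).Nonempty) ∧
      ¬ Gq ⟨k - 1, by omega⟩ ⊆ R) →
      ((B ∪ Finset.univ.biUnion S).card : ℤ) -
        ((R ∪ Finset.univ.biUnion Gq).card : ℤ) < (B.card : ℤ) - (R.card : ℤ)) := by
  classical
  set S' : ℕ → Finset V := fun i => if h : i < k then S ⟨i, h⟩ else ∅ with hS'def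
  set Gq' : ℕ → Finset (Finset V) := fun i => if h : i < k then Gq ⟨i, h⟩ else ∅ with hGq'def
  have hS' : ∀ i (h : i < k), S' i = S ⟨i, h⟩ := fun i h => dif_pos h
  have hGq' : ∀ i (h : i < k), Gq' i = Gq ⟨i, h⟩ := fun i h => dif_pos h
  have hUS : B ∪ Finset.univ.biUnion S = acc B S' k := by
    ext a
    rw [mem_acc]
    simp only [Finset.mem_union, Finset.mem_biUnion, Finset.mem_univ, true_and]
    apply or_congr_right
    constructor
    · rintro ⟨i, hi⟩
      exact ⟨i.1, i.2, by rw [hS' i.1 i.2]; exact hi⟩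
    · rintro ⟨i, hi, h⟩
      exact ⟨⟨i, hi⟩, by rwa [hS' i hi] at h⟩
  have hUG : R ∪ Finset.univ.biUnion Gq = acc R Gq' k := by
    ext a
    rw [mem_acc]
    simp only [Finset.mem_union, Finset.mem_biUnion, Finset.mem_univ, true_and]
    apply or_congr_right
    constructor
    · rintro ⟨i, hi⟩
      exact ⟨i.1, i.2, by rw [hGq' i.1 i.2]; exact hi⟩
    · rintro ⟨i, hi, h⟩
      exact ⟨⟨i, hi⟩, by rwa [hGq' i hi] at h⟩
  have main := chain_aux n k hn hk Rel hRel B R hR S' Gq'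
    (fun i hi => by rw [hS' i hi, hGq' i hi]; exact hG ⟨i, hi⟩)
    (fun i hi => by rw [hS' i hi]; exact hbig ⟨i, hi⟩)
    (fun i hi => by rw [hS' i hi, hGq' i hi]; exact hdim ⟨i, hi⟩)
    (fun i hi => by rw [hS' i hi, hGq' i hi]; exact hintertwined ⟨i, hi⟩)
    (fun i hi j hj hij => by
      rw [hGq' i hi, hGq' j hj]
      exact hasocial ⟨i, hi⟩ ⟨j, hj⟩ (fun h => hij (by injection h)))
    (by rw [hGq' 0 hk]; exact hadj0)
    (fun i h => by rw [hGq' i (by omega), hGq' (i+1) h]; exact hadj i h)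
  rw [hUS, hUG]
  refine ⟨main.1, ?_⟩
  rintro ⟨p1, p2, p3⟩
  apply main.2
  have hfb : (Finset.univ.filter (fun i : Fin k => (i : ℕ) < k - 2)).biUnion Gq =
      (Finset.range (k-2)).biUnion Gq' := by
    ext a
    simp only [Finset.mem_biUnion, Finset.mem_filter, Finset.mem_univ, true_and,
      Finset.mem_range]
    constructor
    · rintro ⟨i, hi, h⟩
      exact ⟨i.1, hi, by rw [hGq' i.1 i.2]; exact h⟩
    · rintro ⟨i, hi, h⟩
      exact ⟨⟨i, by omega⟩, hi, by rwa [hGq' i (by omega)] at h⟩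
  refine ⟨?_, ?_, ?_⟩
  · intro hk1
    rw [hGq' 0 hk]
    exact p1 hk1
  · intro h1
    obtain ⟨r, hr1, hr2⟩ := p2 h1
    refine ⟨r, ?_, ?_⟩
    · rw [hGq' (k-2) (by omega), hGq' (k-1) (by omega)]
      exact hr1
    · rw [hGq' (k-1) (by omega), hfb] at *
      exact hr2
  · rw [hGq' (k-1) (by omega)]
    exact p3
end
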